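/- arXiv:1908.05850 — 5 statements merged into one kernel-verified Lean document; each statement's English description precedes it below -/
import Mathlib

section
/- Let d ≥ 1, a > 0, r ∈ ℝ, b ∈ ℝ^d, β ∈ ℝ^{d×d}. Suppose b_k + a·min_{l≠k} min(β_{k,l},0) ≥ 0 for all k. Then for every (x,y) in the set E = {(x,y) ∈ ℝ^{1+d} : x > 0, y ≥ 0 componentwise, 1ᵀy ≤ a·x}, and every index k with y_k = 0, the drift component μ_k(x,y) = b_k·x + Σ_l β_{k,l}·y_l is nonnegative. -/
/-- Inward-pointing drift at the boundary `{y_k = 0}` of the state space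
`E = {(x,y) : x > 0, y ≥ 0, 1ᵀy ≤ a x}`. The condition
`b_k + a · min_{l ≠ k} min(β_{k,l}, 0) ≥ 0` is stated equivalently as
`b_k ≥ 0` together with `b_k + a · min(β_{k,l}, 0) ≥ 0` for every `l ≠ k`. -/
theorem inward_drift_yk_zero (d : ℕ) (hd : 1 ≤ d) (a r : ℝ) (ha : 0 < a)
    (b : Fin d → ℝ) (β : Matrix (Fin d) (Fin d) ℝ)
    (hcond : ∀ k : Fin d, 0 ≤ b k ∧ ∀ l : Fin d, l ≠ k → 0 ≤ b k + a * min (β k l) 0) :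
    ∀ (x : ℝ) (y : Fin d → ℝ), 0 < x → (∀ l, 0 ≤ y l) → (∑ l, y l) ≤ a * x →
      ∀ k : Fin d, y k = 0 → 0 ≤ b k * x + ∑ l, β k l * y l := by
  intro x y hx hy hsum k hyk
  obtain ⟨hb, hβ⟩ := hcond k
  have key : ∀ l, (-(b k) / a) * y l ≤ β k l * y l := by
    intro l
    by_cases hl : l = k
    · simp [hl, hyk]
    · have h1 : 0 ≤ b k + a * min (β k l) 0 := hβ l hl
      have h2 : -(b k) / a ≤ β k l := by
        have : -(b k) / a ≤ min (β k l) 0 := by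
          rw [div_le_iff₀ ha] at *
          nlinarith [min_le_left (β k l) 0]
        exact this.trans (min_le_left _ _)
      exact mul_le_mul_of_nonneg_right h2 (hy l)
  have hle : (-(b k) / a) * ∑ l, y l ≤ ∑ l, β k l * y l := by
    rw [Finset.mul_sum]
    exact Finset.sum_le_sum fun l _ => key l
  have hneg : -(b k) / a ≤ 0 := div_nonpos_of_nonpos_of_nonneg (by linarith) ha.le
  have h3 : (-(b k) / a) * (a * x) ≤ (-(b k) / a) * ∑ l, y l :=
    mul_le_mul_of_nonpos_left hsum hneg
  have h4 : (-(b k) / a) * (a * x) = -(b k) * x := by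
    field_simp
  linarith
end

section
/- Let d ≥ 1 and consider the linear ODE system on [0,∞): f' = −1ᵀg, g' = b·f + (β − r·Id)·g, with f : [0,∞) → ℝ, g : [0,∞) → ℝ^d, b ∈ ℝ^d, β ∈ ℝ^{d×d}, r ∈ ℝ. Assume that for all s ≥ 0: f(s) > 0, g(s) ≥ 0 componentwise, and 1ᵀg(s) ≤ a·f(s) for some constant a > 0. If 1ᵀb > 0, then lim_{s→∞} f(s) = 0 and lim_{s→∞} g(s) = 0. -/
/-!
Since `f' = -1ᵀg ≤ 0` and `f > 0`, `f` decreases to a limit `L`. The state `(f, g)` stays in a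
compact box (`0 ≤ gₖ ≤ 1ᵀg ≤ a f ≤ a f(0)`), so `(1ᵀg)'`, a fixed linear form of the state, is
bounded; by Barbalat's lemma `f' = -1ᵀg → 0`, hence every `gₖ → 0`. Then
`(1ᵀg)' → (1ᵀb) L`, and the derivative of a convergent function can only converge to `0`,
so `(1ᵀb) L = 0` and `L = 0`.
-/

open Filter Set Topology

theorem exists_tendsto_atTop_of_antitoneOn_Ici {φ : ℝ → ℝ} {T c : ℝ}
    (hφ : AntitoneOn φ (Ici T)) (hc : ∀ s ∈ Ici T, c ≤ φ s) :
    ∃ L, Tendsto φ atTop (𝓝 L) := by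
  have hanti : Antitone fun s => φ (max T s) := fun x y hxy =>
    hφ (le_max_left T x) (le_max_left T y) (max_le_max le_rfl hxy)
  have hbdd : BddBelow (range fun s => φ (max T s)) :=
    ⟨c, forall_mem_range.2 fun s => hc _ (le_max_left T s)⟩
  refine ⟨_, (tendsto_atTop_ciInf hanti hbdd).congr' ?_⟩
  filter_upwards [eventually_ge_atTop T] with s hs
  rw [max_eq_right hs]

theorem eq_zero_of_tendsto_of_tendsto_deriv {φ φ' : ℝ → ℝ} {T L ℓ : ℝ}
    (hφ : ∀ s ∈ Ici T, HasDerivAt φ (φ' s) s) (hlim : Tendsto φ atTop (𝓝 L))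
    (hφ' : Tendsto φ' atTop (𝓝 ℓ)) : ℓ = 0 := by
  have hmvt : ∀ s ∈ Ici T, ∃ ξ ∈ Ioo s (s + 1), φ' ξ = φ (s + 1) - φ s := fun s hs => by
    simpa using exists_hasDerivAt_eq_slope φ φ' (lt_add_one s)
      (fun t ht => (hφ t (le_trans hs ht.1)).continuousAt.continuousWithinAt)
      (fun t ht => hφ t (le_trans hs ht.1.le))
  choose! ξ hξ hφξ using hmvt
  have hξ_top : Tendsto ξ atTop atTop :=
    tendsto_atTop_mono' _ ((eventually_ge_atTop T).mono fun s hs => (hξ s hs).1.le) tendsto_id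
  have hinc : Tendsto (fun s => φ (s + 1) - φ s) atTop (𝓝 ℓ) :=
    (hφ'.comp hξ_top).congr' ((eventually_ge_atTop T).mono hφξ)
  refine tendsto_nhds_unique hinc ?_
  simpa using (hlim.comp (tendsto_atTop_add_const_right _ 1 tendsto_id)).sub hlim

/-- Barbalat's lemma, with the uniform continuity of `φ'` coming from a bound on `φ''`. -/
theorem tendsto_deriv_atTop_zero_of_bounded_second_deriv {φ φ' φ'' : ℝ → ℝ} {T K L : ℝ}
    (hφ : ∀ s ∈ Ici T, HasDerivAt φ (φ' s) s) (hφ' : ∀ s ∈ Ici T, HasDerivAt φ' (φ'' s) s)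
    (hφ'' : ∀ s ∈ Ici T, |φ'' s| ≤ K) (hlim : Tendsto φ atTop (𝓝 L)) :
    Tendsto φ' atTop (𝓝 0) := by
  have hK : 0 ≤ K := (abs_nonneg _).trans (hφ'' T self_mem_Ici)
  have hstep : ∀ s ∈ Ici T, ∀ δ > 0, δ * |φ' s| ≤ |φ (s + δ) - φ s| + K * δ ^ 2 := by
    intro s hs δ hδ
    obtain ⟨ξ, hξ, hφξ⟩ := exists_hasDerivAt_eq_slope φ φ' (lt_add_of_pos_right s hδ)
      (fun t ht => (hφ t (le_trans hs ht.1)).continuousAt.continuousWithinAt)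
      (fun t ht => hφ t (le_trans hs ht.1.le))
    rw [add_sub_cancel_left] at hφξ
    have hslope : δ * |φ' ξ| = |φ (s + δ) - φ s| := by
      rw [hφξ, abs_div, abs_of_pos hδ, mul_div_cancel₀ _ hδ.ne']
    have hlip : |φ' ξ - φ' s| ≤ K * |ξ - s| :=
      (convex_Ici T).norm_image_sub_le_of_norm_hasDerivWithin_le
        (fun t ht => (hφ' t ht).hasDerivWithinAt) hφ'' hs (le_trans hs hξ.1.le)
    rw [abs_of_pos (sub_pos.2 hξ.1)] at hlip
    have hφ's : |φ' s| ≤ |φ' ξ| + K * δ := calc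
      |φ' s| ≤ |φ' ξ| + |φ' ξ - φ' s| := by
        linarith [abs_sub_abs_le_abs_sub (φ' s) (φ' ξ), abs_sub_comm (φ' s) (φ' ξ)]
      _ ≤ |φ' ξ| + K * δ := by gcongr; nlinarith [hξ.2]
    nlinarith
  rw [Metric.tendsto_atTop]
  intro ε hε
  set δ := ε / (2 * (K + 1)) with hδ_def
  have hδ : 0 < δ := by positivity
  have hKδ : K * δ ≤ ε / 2 := by
    rw [hδ_def, mul_div_assoc', div_le_div_iff₀ (by positivity) two_pos]
    nlinarith
  have hinc : Tendsto (fun s => φ (s + δ) - φ s) atTop (𝓝 0) := by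
    simpa using (hlim.comp (tendsto_atTop_add_const_right _ δ tendsto_id)).sub hlim
  obtain ⟨N, hN⟩ := Metric.tendsto_atTop.1 hinc (δ * ε / 2) (by positivity)
  refine ⟨max N T, fun s hs => ?_⟩
  have h1 := hstep s (le_of_max_le_right hs) δ hδ
  have h2 := hN s (le_of_max_le_left hs)
  rw [Real.dist_eq, sub_zero] at h2 ⊢
  nlinarith

theorem no_bubble_ode_general (d : ℕ) (a r : ℝ) (ha : 0 < a)
    (b : Fin d → ℝ) (β : Matrix (Fin d) (Fin d) ℝ)
    (f : ℝ → ℝ) (g : ℝ → Fin d → ℝ)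
    (hf' : ∀ s ∈ Set.Ici (0 : ℝ), HasDerivAt f (-(∑ k, g s k)) s)
    (hg' : ∀ s ∈ Set.Ici (0 : ℝ), ∀ k : Fin d,
      HasDerivAt (fun u => g u k) (b k * f s + ((∑ l, β k l * g s l) - r * g s k)) s)
    (hfpos : ∀ s ∈ Set.Ici (0 : ℝ), 0 < f s)
    (hgpos : ∀ s ∈ Set.Ici (0 : ℝ), ∀ k, 0 ≤ g s k)
    (hbd : ∀ s ∈ Set.Ici (0 : ℝ), (∑ k, g s k) ≤ a * f s)
    (hb : 0 < ∑ k, b k) :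
    Tendsto f atTop (nhds 0) ∧ ∀ k : Fin d, Tendsto (fun s => g s k) atTop (nhds 0) := by
  set u : ℝ → ℝ := fun s => ∑ k, g s k
  set F : ℝ × (Fin d → ℝ) → ℝ := fun x =>
    ∑ k, (b k * x.1 + ((∑ l, β k l * x.2 l) - r * x.2 k))
  have hu : ∀ s ∈ Ici 0, HasDerivAt u (F (f s, g s)) s := fun s hs =>
    HasDerivAt.fun_sum fun k _ => hg' s hs k
  have hg_le : ∀ s ∈ Ici 0, ∀ k, g s k ≤ u s := fun s hs k =>
    Finset.single_le_sum (fun l _ => hgpos s hs l) (Finset.mem_univ k)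
  have hf_anti : AntitoneOn f (Ici 0) :=
    antitoneOn_of_hasDerivWithinAt_nonpos (convex_Ici 0)
      (fun s hs => (hf' s hs).continuousAt.continuousWithinAt)
      (fun s hs => (hf' s (interior_subset hs)).hasDerivWithinAt)
      (fun s hs => neg_nonpos.2 (Finset.sum_nonneg fun k _ => hgpos s (interior_subset hs) k))
  obtain ⟨L, hfL⟩ := exists_tendsto_atTop_of_antitoneOn_Ici hf_anti fun s hs => (hfpos s hs).le
  have hbox : ∀ s ∈ Ici 0, (f s, g s) ∈ Icc (0, 0) (f 0, fun _ => a * f 0) := fun s hs =>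
    have hfs : f s ≤ f 0 := hf_anti self_mem_Ici hs hs
    ⟨⟨(hfpos s hs).le, hgpos s hs⟩, hfs, fun k =>
      (hg_le s hs k).trans ((hbd s hs).trans (mul_le_mul_of_nonneg_left hfs ha.le))⟩
  obtain ⟨K, hK⟩ := isCompact_Icc.exists_bound_of_continuousOn (f := F) (by fun_prop)
  have hu0 : Tendsto u atTop (𝓝 0) := by
    simpa using (tendsto_deriv_atTop_zero_of_bounded_second_deriv hf'
      (fun s hs => (hu s hs).neg) (fun s hs => by simpa using hK _ (hbox s hs)) hfL).neg
  have hg0 : ∀ k, Tendsto (fun s => g s k) atTop (𝓝 0) := fun k =>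
    tendsto_of_tendsto_of_tendsto_of_le_of_le' tendsto_const_nhds hu0
      ((eventually_ge_atTop 0).mono fun s hs => hgpos s hs k)
      ((eventually_ge_atTop 0).mono fun s hs => hg_le s hs k)
  have hFL : Tendsto (fun s => F (f s, g s)) atTop (𝓝 ((∑ k, b k) * L)) := by
    have hF : Continuous F := by fun_prop
    simpa [F, Finset.sum_mul, Function.comp_def] using
      (hF.tendsto (L, 0)).comp (hfL.prodMk_nhds (tendsto_pi_nhds.2 hg0))
  have hL : L = 0 :=
    (mul_eq_zero.1 (eq_zero_of_tendsto_of_tendsto_deriv hu hu0 hFL)).resolve_left hb.ne'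
  exact ⟨hL ▸ hfL, hg0⟩

/-- Deterministic core of the no-bubble result: if `f' = −1ᵀg`,
`g' = b·f + (β − r·Id)·g` on `[0,∞)`, with `f > 0`, `g ≥ 0` componentwise and
`1ᵀg ≤ a·f`, and `1ᵀb > 0`, then `f(s) → 0` and `g(s) → 0` as `s → ∞`. -/
theorem no_bubble_ode (d : ℕ) (hd : 1 ≤ d) (a r : ℝ) (ha : 0 < a)
    (b : Fin d → ℝ) (β : Matrix (Fin d) (Fin d) ℝ)
    (f : ℝ → ℝ) (g : ℝ → Fin d → ℝ)
    (hf' : ∀ s ∈ Set.Ici (0 : ℝ), HasDerivAt f (-(∑ k, g s k)) s)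
    (hg' : ∀ s ∈ Set.Ici (0 : ℝ), ∀ k : Fin d,
      HasDerivAt (fun u => g u k) (b k * f s + ((∑ l, β k l * g s l) - r * g s k)) s)
    (hfpos : ∀ s ∈ Set.Ici (0 : ℝ), 0 < f s)
    (hgpos : ∀ s ∈ Set.Ici (0 : ℝ), ∀ k, 0 ≤ g s k)
    (hbd : ∀ s ∈ Set.Ici (0 : ℝ), (∑ k, g s k) ≤ a * f s)
    (hb : 0 < ∑ k, b k) :
    Tendsto f atTop (nhds 0) ∧ ∀ k : Fin d, Tendsto (fun s => g s k) atTop (nhds 0) :=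
  no_bubble_ode_general d a r ha b β f g hf' hg' hfpos hgpos hbd hb
end

section
/- Let d ≥ 1 and consider the (2+d)-dimensional polynomial operator G acting on smooth functions f(c,x,y) by G f = (1ᵀy)·f_c + (rx − 1ᵀy)·f_x + Σ_k (b_k x + (βy)_k)·f_{y_k} + ½σ²(x − 1ᵀy/a)²·f_{xx} + ½ Σ_k ν_k² y_k (x − 1ᵀy/a)·f_{y_k y_k}. Then for every n ∈ ℕ, G maps the space of polynomials of total degree at most n in (c,x,y) into itself. -/
open MvPolynomial

noncomputable section

lemma totalDegree_pderiv_le' {σ : Type*} [DecidableEq σ] {n : ℕ}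
    (i : σ) (p : MvPolynomial σ ℝ) (hp : p.totalDegree ≤ n + 1) :
    (pderiv i p).totalDegree ≤ n := by
  conv_lhs => rw [p.as_sum]
  rw [map_sum]
  refine totalDegree_finsetSum_le fun m hm => ?_
  rw [pderiv_monomial]
  rcases Nat.eq_zero_or_pos (m i) with h | h
  · simp [h]
  · refine (totalDegree_monomial_le _ _).trans ?_
    show (m - Finsupp.single i 1).sum (fun _ e => e) ≤ n
    have hle : Finsupp.single i 1 ≤ m := by
      rwa [Finsupp.single_le_iff]
    have hsum : m.sum (fun _ e => e) = (m - Finsupp.single i 1).sum (fun _ e => e) + 1 := by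
      conv_lhs => rw [← tsub_add_cancel_of_le hle]
      rw [Finsupp.sum_add_index' (fun _ => rfl) (fun _ _ _ => rfl),
        Finsupp.sum_single_index rfl]
    have hm' : m.sum (fun _ e => e) ≤ n + 1 := le_trans (le_totalDegree hm) hp
    omega

lemma pderiv_eq_zero_of_totalDegree_eq_zero {σ : Type*} [DecidableEq σ]
    (i : σ) (p : MvPolynomial σ ℝ) (hp : p.totalDegree = 0) :
    pderiv i p = 0 := by
  conv_lhs => rw [p.as_sum]
  rw [map_sum]
  refine Finset.sum_eq_zero fun m hm => ?_
  rw [pderiv_monomial]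
  have : m i = 0 := (totalDegree_eq_zero_iff σ p).mp hp m hm i
  simp [this]

lemma mul_pderiv_le {σ : Type*} [DecidableEq σ] {n : ℕ}
    (q : MvPolynomial σ ℝ) (i : σ) (p : MvPolynomial σ ℝ)
    (hq : q.totalDegree ≤ 1) (hp : p.totalDegree ≤ n) :
    (q * pderiv i p).totalDegree ≤ n := by
  cases n with
  | zero =>
      rw [pderiv_eq_zero_of_totalDegree_eq_zero i p (Nat.le_zero.mp hp), mul_zero,
        totalDegree_zero]
  | succ m =>
      refine (totalDegree_mul _ _).trans ?_
      have := totalDegree_pderiv_le' i p hp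
      omega

lemma mul_pderiv_pderiv_le {σ : Type*} [DecidableEq σ] {n : ℕ}
    (q : MvPolynomial σ ℝ) (i j : σ) (p : MvPolynomial σ ℝ)
    (hq : q.totalDegree ≤ 2) (hp : p.totalDegree ≤ n) :
    (q * pderiv i (pderiv j p)).totalDegree ≤ n := by
  match n with
  | 0 =>
      rw [pderiv_eq_zero_of_totalDegree_eq_zero j p (Nat.le_zero.mp hp), map_zero, mul_zero,
        totalDegree_zero]
  | 1 =>
      have h0 : (pderiv j p).totalDegree ≤ 0 := totalDegree_pderiv_le' j p hp
      rw [pderiv_eq_zero_of_totalDegree_eq_zero i _ (Nat.le_zero.mp h0), mul_zero,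
        totalDegree_zero]
      omega
  | (m + 2) =>
      refine (totalDegree_mul _ _).trans ?_
      have h1 : (pderiv j p).totalDegree ≤ m + 1 := totalDegree_pderiv_le' j p hp
      have h2 : (pderiv i (pderiv j p)).totalDegree ≤ m := totalDegree_pderiv_le' i _ h1
      omega


/-- The infinitesimal generator of `(C_t, X_t, Y_t)` acting on polynomials in the
variables `c` (index 0), `x` (index 1) and `y_k` (index `k+2`). -/
def generatorCXY (d : ℕ) (r σ a : ℝ) (b : Fin d → ℝ) (β : Matrix (Fin d) (Fin d) ℝ)
    (ν : Fin d → ℝ) (p : MvPolynomial (Fin (d + 2)) ℝ) : MvPolynomial (Fin (d + 2)) ℝ :=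
  (∑ k : Fin d, X k.succ.succ) * pderiv 0 p
    + (C r * X 1 - ∑ k : Fin d, X k.succ.succ) * pderiv 1 p
    + ∑ k : Fin d, (C (b k) * X 1 + ∑ l : Fin d, C (β k l) * X l.succ.succ) *
        pderiv k.succ.succ p
    + C (σ ^ 2 / 2) * (X 1 - C (1 / a) * ∑ k : Fin d, X k.succ.succ) ^ 2 *
        pderiv 1 (pderiv 1 p)
    + ∑ k : Fin d, C (ν k ^ 2 / 2) * X k.succ.succ *
        (X 1 - C (1 / a) * ∑ l : Fin d, X l.succ.succ) *
        pderiv k.succ.succ (pderiv k.succ.succ p)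

/-- The generator of `(C_t, X_t, Y_t)` maps polynomials of total degree at most `n`
into polynomials of total degree at most `n`, for every `n`. -/
theorem generator_polynomial_preserving (d : ℕ) (hd : 1 ≤ d) (r σ a : ℝ)
    (hσ : 0 < σ) (ha : 0 < a) (b : Fin d → ℝ) (β : Matrix (Fin d) (Fin d) ℝ)
    (ν : Fin d → ℝ) :
    ∀ (n : ℕ) (p : MvPolynomial (Fin (d + 2)) ℝ), p.totalDegree ≤ n →
      (generatorCXY d r σ a b β ν p).totalDegree ≤ n := by
  intro n p hp
  have hsumX : (∑ k : Fin d, (X k.succ.succ : MvPolynomial (Fin (d + 2)) ℝ)).totalDegree ≤ 1 :=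
    totalDegree_finsetSum_le fun k _ => (totalDegree_X _).le
  have hlin : ∀ c : ℝ, ∀ i : Fin (d + 2),
      ((C c * X i : MvPolynomial (Fin (d + 2)) ℝ)).totalDegree ≤ 1 := fun c i =>
    (totalDegree_mul _ _).trans (by simp [totalDegree_X])
  have hXsub : ((X 1 - C (1 / a) * ∑ k : Fin d, X k.succ.succ :
      MvPolynomial (Fin (d + 2)) ℝ)).totalDegree ≤ 1 := by
    refine (totalDegree_sub _ _).trans (max_le (totalDegree_X _).le ?_)
    exact (totalDegree_mul _ _).trans (by simpa using hsumX)
  unfold generatorCXY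
  refine (totalDegree_add _ _).trans (max_le ((totalDegree_add _ _).trans (max_le
    ((totalDegree_add _ _).trans (max_le ((totalDegree_add _ _).trans (max_le ?_ ?_)) ?_)) ?_)) ?_)
  · exact mul_pderiv_le _ _ _ hsumX hp
  · refine mul_pderiv_le _ _ _ ?_ hp
    exact (totalDegree_sub _ _).trans (max_le (hlin r 1) hsumX)
  · refine totalDegree_finsetSum_le fun k _ => ?_
    refine mul_pderiv_le _ _ _ ?_ hp
    refine (totalDegree_add _ _).trans (max_le (hlin _ 1) ?_)
    exact totalDegree_finsetSum_le fun l _ => hlin _ _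
  · refine mul_pderiv_pderiv_le _ _ _ _ ?_ hp
    refine (totalDegree_mul _ _).trans ?_
    have : ((X 1 - C (1 / a) * ∑ k : Fin d, X k.succ.succ :
        MvPolynomial (Fin (d + 2)) ℝ) ^ 2).totalDegree ≤ 2 := by
      refine (totalDegree_pow _ _).trans ?_
      omega
    simpa using this
  · refine totalDegree_finsetSum_le fun k _ => ?_
    refine mul_pderiv_pderiv_le _ _ _ _ ?_ hp
    refine (totalDegree_mul _ _).trans ?_
    have h1 : ((C (ν k ^ 2 / 2) * X k.succ.succ :
        MvPolynomial (Fin (d + 2)) ℝ)).totalDegree ≤ 1 := hlin _ _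
    omega
end
end

section
/- Let a > 0 and consider the state space E = {(x,y) ∈ ℝ^{1+d} : x > 0, y ≥ 0, 1ᵀy ≤ ax}. For (x,y) ∈ E with y_k ≤ ε (ε > 0), suppose 2β_{k,k} + ν_k²/a ≥ 0 and 2b_k − ν_k² + min_{l≠k} min(2aβ_{k,l} + ν_k², 0) ≥ 0. Then 2(b_k x + Σ_l β_{k,l} y_l) − (x − 1ᵀy/a)·ν_k² ≥ 0. -/
/-- Key inequality `2𝒢p − hᵀ∇p ≥ 0` with `p(x,y) = y_k` in the boundary
non-attainment argument for the factor components. The condition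
`2b_k − ν_k² + min_{l≠k} min(2aβ_{k,l} + ν_k², 0) ≥ 0` is stated equivalently as
`2b_k − ν_k² ≥ 0` together with the inequality for each `l ≠ k`. -/
theorem boundary_nonattainment_yk (d : ℕ) (hd : 1 ≤ d) (a : ℝ) (ha : 0 < a)
    (b ν : Fin d → ℝ) (β : Matrix (Fin d) (Fin d) ℝ) (k : Fin d) (ε : ℝ) (hε : 0 < ε)
    (h1 : 0 ≤ 2 * β k k + ν k ^ 2 / a)
    (h2 : 0 ≤ 2 * b k - ν k ^ 2)
    (h2' : ∀ l : Fin d, l ≠ k → 0 ≤ 2 * b k - ν k ^ 2 + min (2 * a * β k l + ν k ^ 2) 0) :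
    ∀ (x : ℝ) (y : Fin d → ℝ), 0 < x → (∀ l, 0 ≤ y l) → (∑ l, y l) ≤ a * x →
      y k ≤ ε →
      0 ≤ 2 * (b k * x + ∑ l, β k l * y l) - (x - (∑ l, y l) / a) * ν k ^ 2 := by
  intro x y hx hy hS _
  have ha' : a ≠ 0 := ne_of_gt ha
  set C : ℝ := 2 * b k - ν k ^ 2 with hC
  -- rewrite sum
  have hU : (∑ l, y l * (2 * β k l + ν k ^ 2 / a))
      = 2 * (∑ l, β k l * y l) + (∑ l, y l) * (ν k ^ 2 / a) := by
    rw [show (∑ l, y l * (2 * β k l + ν k ^ 2 / a))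
        = ∑ l, (2 * (β k l * y l) + y l * (ν k ^ 2 / a)) from
      Finset.sum_congr rfl (fun l _ => by ring)]
    rw [Finset.sum_add_distrib, ← Finset.mul_sum, ← Finset.sum_mul]
  have keyeq : 2 * (b k * x + ∑ l, β k l * y l) - (x - (∑ l, y l) / a) * ν k ^ 2
      = C * x + ∑ l, y l * (2 * β k l + ν k ^ 2 / a) := by
    rw [hU, hC]; ring
  rw [keyeq]
  -- split off the k term
  have hsplit : (∑ l, y l * (2 * β k l + ν k ^ 2 / a))
      = y k * (2 * β k k + ν k ^ 2 / a)
        + ∑ l ∈ Finset.univ.erase k, y l * (2 * β k l + ν k ^ 2 / a) :=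
    (Finset.add_sum_erase _ _ (Finset.mem_univ k)).symm
  -- bound each off-diagonal term below
  have hterm : ∀ l ∈ Finset.univ.erase k,
      y l * (-(C / a)) ≤ y l * (2 * β k l + ν k ^ 2 / a) := by
    intro l hl
    have hlk : l ≠ k := Finset.ne_of_mem_erase hl
    have h := h2' l hlk
    have hmin : min (2 * a * β k l + ν k ^ 2) 0 ≤ 2 * a * β k l + ν k ^ 2 :=
      min_le_left _ _
    have hge : -C ≤ 2 * a * β k l + ν k ^ 2 := by rw [hC]; linarith
    have : -(C / a) ≤ 2 * β k l + ν k ^ 2 / a := by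
      rw [show (2 : ℝ) * β k l + ν k ^ 2 / a = (2 * a * β k l + ν k ^ 2) / a by
        field_simp]
      rw [← neg_div]
      gcongr
    exact mul_le_mul_of_nonneg_left this (hy l)
  have hsum : (∑ l ∈ Finset.univ.erase k, y l * (-(C / a)))
      ≤ ∑ l ∈ Finset.univ.erase k, y l * (2 * β k l + ν k ^ 2 / a) :=
    Finset.sum_le_sum hterm
  have hsum' : (∑ l ∈ Finset.univ.erase k, y l * (-(C / a)))
      = (∑ l ∈ Finset.univ.erase k, y l) * (-(C / a)) := (Finset.sum_mul _ _ _).symm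
  have herase : (∑ l ∈ Finset.univ.erase k, y l) ≤ a * x := by
    have := Finset.add_sum_erase Finset.univ y (Finset.mem_univ k)
    have hyk := hy k
    linarith [this ▸ hS]
  have herase0 : 0 ≤ (∑ l ∈ Finset.univ.erase k, y l) :=
    Finset.sum_nonneg fun l _ => hy l
  have hCa : -(C / a) ≤ 0 := by
    have : 0 ≤ C / a := div_nonneg h2 ha.le
    linarith
  have hbound : (a * x) * (-(C / a)) ≤ (∑ l ∈ Finset.univ.erase k, y l) * (-(C / a)) := by
    exact mul_le_mul_of_nonpos_right herase hCa
  have hax : (a * x) * (-(C / a)) = -(C * x) := by field_simp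
  have hyk0 : 0 ≤ y k * (2 * β k k + ν k ^ 2 / a) := mul_nonneg (hy k) h1
  rw [hsplit]
  nlinarith [hsum, hsum', hbound, hax, hyk0]
end

section
/- For d = 1, define the dividend yield δ = D/X for the single-factor model dX = (rX − D)dt + σ(X − D/a)dW, dD = (bX + βD)dt + ν₁√(D(X − D/a))dB with independent Brownian motions W, B and X > 0, 0 ≤ D ≤ aX. Then by Itô's formula δ satisfies dδ = (b + (β − r)δ + δ² + σ²δ(1 − δ/a)²)dt − σδ(1 − δ/a)dW + ν₁√(δ(1 − δ/a))dB, and in particular δ is an autonomous diffusion taking values in [0, a]. -/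
/-! Write `δ = D/X`. Since `D = Xδ` and `X - D/a = X(1 - δ/a)`, every Itô coefficient of
`f(X, D) = D/X` is `X^k` times a function of `δ`, and the powers of `X` cancel; in the
`dB`-coefficient the factor `X²` comes out of the square root because `X > 0`. -/

namespace DividendYield

lemma div_mem_Icc {x dd a : ℝ} (hx : 0 < x) (hd : 0 ≤ dd) (hda : dd ≤ a * x) :
    dd / x ∈ Set.Icc 0 a :=
  ⟨div_nonneg hd hx.le, (div_le_iff₀ hx).2 hda⟩

lemma sub_div_eq_mul_one_sub (x dd a : ℝ) (hx : x ≠ 0) :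
    x - dd / a = x * (1 - dd / x / a) := by
  field_simp

lemma drift_eq (a b β r σ x dd : ℝ) (hx : x ≠ 0) :
    (-(dd / x ^ 2)) * (r * x - dd) + (1 / x) * (b * x + β * dd) +
        (1 / 2) * (2 * dd / x ^ 3) * (σ * (x - dd / a)) ^ 2
      = b + (β - r) * (dd / x) + (dd / x) ^ 2 +
          σ ^ 2 * (dd / x) * (1 - (dd / x) / a) ^ 2 := by
  rw [sub_div_eq_mul_one_sub x dd a hx]
  field_simp
  ring

lemma diffusion_W_eq (a σ x dd : ℝ) (hx : x ≠ 0) :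
    (-(dd / x ^ 2)) * (σ * (x - dd / a)) = -(σ * (dd / x) * (1 - (dd / x) / a)) := by
  rw [sub_div_eq_mul_one_sub x dd a hx]
  field_simp

lemma diffusion_B_eq (a ν₁ x dd : ℝ) (hx : 0 < x) :
    (1 / x) * (ν₁ * Real.sqrt (dd * (x - dd / a)))
      = ν₁ * Real.sqrt ((dd / x) * (1 - (dd / x) / a)) := by
  have hfactor : dd * (x - dd / a) = x ^ 2 * ((dd / x) * (1 - (dd / x) / a)) := by
    rw [sub_div_eq_mul_one_sub x dd a hx.ne']
    field_simp
  rw [hfactor, Real.sqrt_mul (sq_nonneg x), Real.sqrt_sq hx.le]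
  field_simp

end DividendYield

/-- Itô's formula for `f(x, D) = D/x`: the drift is `f_x·μ_X + f_D·μ_D + ½ f_xx·σ_X²`
(`W` and `B` are independent and `f_DD = 0`), the `dW`- and `dB`-coefficients are
`f_x·σ_X` and `f_D·σ_D`. -/
theorem dividend_yield_sde_general (a σ b β r ν₁ : ℝ) :
    ∀ x dd : ℝ, 0 < x → 0 ≤ dd → dd ≤ a * x →
      0 ≤ dd / x ∧ dd / x ≤ a ∧
      (-(dd / x ^ 2)) * (r * x - dd) + (1 / x) * (b * x + β * dd) +
          (1 / 2) * (2 * dd / x ^ 3) * (σ * (x - dd / a)) ^ 2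
        = b + (β - r) * (dd / x) + (dd / x) ^ 2 +
            σ ^ 2 * (dd / x) * (1 - (dd / x) / a) ^ 2 ∧
      (-(dd / x ^ 2)) * (σ * (x - dd / a)) = -(σ * (dd / x) * (1 - (dd / x) / a)) ∧
      (1 / x) * (ν₁ * Real.sqrt (dd * (x - dd / a)))
        = ν₁ * Real.sqrt ((dd / x) * (1 - (dd / x) / a)) := by
  intro x dd hx hd hda
  obtain ⟨hδ_nonneg, hδ_le⟩ := DividendYield.div_mem_Icc hx hd hda
  exact ⟨hδ_nonneg, hδ_le, DividendYield.drift_eq a b β r σ x dd hx.ne',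
    DividendYield.diffusion_W_eq a σ x dd hx.ne', DividendYield.diffusion_B_eq a ν₁ x dd hx⟩

/-- The Itô coefficients of the dividend yield `δ = D/X` in the single-factor model:
the transformed drift and diffusion coefficients are functions of `δ` alone, and
`0 ≤ δ ≤ a`. Here the drift of `δ` is
`f_x·μ_X + f_D·μ_D + ½ f_xx·σ_X²` for `f(x,D) = D/x` (the Brownian motions `W` and
`B` being independent, there is no cross term, and `f_DD = 0`). -/
theorem dividend_yield_sde (a σ b β r ν₁ : ℝ) (ha : 0 < a) :
    ∀ x dd : ℝ, 0 < x → 0 ≤ dd → dd ≤ a * x →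
      0 ≤ dd / x ∧ dd / x ≤ a ∧
      (-(dd / x ^ 2)) * (r * x - dd) + (1 / x) * (b * x + β * dd) +
          (1 / 2) * (2 * dd / x ^ 3) * (σ * (x - dd / a)) ^ 2
        = b + (β - r) * (dd / x) + (dd / x) ^ 2 +
            σ ^ 2 * (dd / x) * (1 - (dd / x) / a) ^ 2 ∧
      (-(dd / x ^ 2)) * (σ * (x - dd / a)) = -(σ * (dd / x) * (1 - (dd / x) / a)) ∧
      (1 / x) * (ν₁ * Real.sqrt (dd * (x - dd / a)))
        = ν₁ * Real.sqrt ((dd / x) * (1 - (dd / x) / a)) :=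
  dividend_yield_sde_general a σ b β r ν₁
end
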